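/- arXiv:1611.10057 — 3 statements merged into one kernel-verified Lean document; each statement's English description precedes it below -/
import Mathlib

section
/- Let λ₁ ∈ ℂ with λ₁ ± λ₁* ≠ 0 and A₁ = |x₁⟩⟨y₁|J a rank-one 3×3 matrix where |x₁⟩ = diag(α⁻¹,β⁻¹,β⁻¹)|y₁⟩ with α, β as in the Darboux construction. Define T(λ) = I + A₁/(λ-λ₁*) - σ₃A₁σ₃/(λ+λ₁*) and S(λ) = I + JA₁†J/(λ-λ₁) - σ₃JA₁†Jσ₃/(λ+λ₁). Then the residue of T(λ)S(λ) at λ = λ₁ vanishes, i.e. T(λ₁)|y₁⟩ = 0. -/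
open Matrix

set_option maxHeartbeats 1600000

/-- With `A₁ = |x₁⟩⟨y₁|J` and
`T(λ) = I + A₁/(λ-λ₁*) - σ₃A₁σ₃/(λ+λ₁*)`, the kernel condition `T(λ₁)|y₁⟩ = 0` holds. -/
theorem stmt5 (σ : ℂ) (hσ : σ = 1 ∨ σ = -1) (lam : ℂ)
    (h1 : lam - (starRingEnd ℂ) lam ≠ 0) (h2 : lam + (starRingEnd ℂ) lam ≠ 0)
    (φ ψ χ : ℂ) (α β : ℂ) (hα0 : α ≠ 0) (hβ0 : β ≠ 0)
    (hα : α = 2 * ((starRingEnd ℂ) lam * ((starRingEnd ℂ) φ * φ)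
        - lam * ((starRingEnd ℂ) ψ * ψ + σ * ((starRingEnd ℂ) χ * χ)))
        / (((starRingEnd ℂ) lam) ^ 2 - lam ^ 2))
    (hβ : β = 2 * (lam * ((starRingEnd ℂ) φ * φ)
        - (starRingEnd ℂ) lam * ((starRingEnd ℂ) ψ * ψ + σ * ((starRingEnd ℂ) χ * χ)))
        / (((starRingEnd ℂ) lam) ^ 2 - lam ^ 2)) :
    let σ₃ : Matrix (Fin 3) (Fin 3) ℂ := !![1,0,0; 0,-1,0; 0,0,-1]
    let y : Fin 3 → ℂ := ![φ, ψ, χ]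
    let xv : Fin 3 → ℂ := ![φ / α, ψ / β, χ / β]
    let Jd : Fin 3 → ℂ := ![1, -1, -σ]
    let A₁ : Matrix (Fin 3) (Fin 3) ℂ :=
      Matrix.of fun i j => xv i * (starRingEnd ℂ) (y j) * Jd j
    let T : ℂ → Matrix (Fin 3) (Fin 3) ℂ := fun l =>
      1 + (l - (starRingEnd ℂ) lam)⁻¹ • A₁
        - (l + (starRingEnd ℂ) lam)⁻¹ • (σ₃ * A₁ * σ₃)
    (T lam).mulVec y = 0 := by
  intro σ₃ y xv Jd A₁ T
  have hd : ((starRingEnd ℂ) lam) ^ 2 - lam ^ 2 ≠ 0 := by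
    have h : ((starRingEnd ℂ) lam) ^ 2 - lam ^ 2
        = -((lam - (starRingEnd ℂ) lam) * (lam + (starRingEnd ℂ) lam)) := by ring
    rw [h]
    exact neg_ne_zero.mpr (mul_ne_zero h1 h2)
  have keyα : α * ((lam - (starRingEnd ℂ) lam) * (lam + (starRingEnd ℂ) lam))
      = 2 * (((starRingEnd ℂ) ψ * ψ + σ * ((starRingEnd ℂ) χ * χ)) * lam
        - ((starRingEnd ℂ) φ * φ) * (starRingEnd ℂ) lam) := by
    rw [hα, div_mul_eq_mul_div, div_eq_iff hd]
    ring
  have keyβ : β * ((lam - (starRingEnd ℂ) lam) * (lam + (starRingEnd ℂ) lam))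
      = 2 * (((starRingEnd ℂ) ψ * ψ + σ * ((starRingEnd ℂ) χ * χ)) * (starRingEnd ℂ) lam
        - ((starRingEnd ℂ) φ * φ) * lam) := by
    rw [hβ, div_mul_eq_mul_div, div_eq_iff hd]
    ring
  clear hα hβ hd
  funext i
  fin_cases i
  · simp only [T, A₁, σ₃, y, xv, Jd, Matrix.mulVec, Matrix.mul_apply, dotProduct,
      Fin.sum_univ_three, Matrix.sub_apply, Matrix.add_apply, Matrix.smul_apply,
      Matrix.one_apply, Matrix.of_apply, Matrix.cons_val', Matrix.cons_val_zero,
      Matrix.cons_val_one, Matrix.head_cons, Matrix.empty_val', Matrix.cons_val_fin_one,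
      Matrix.head_fin_const, Matrix.tail_cons, Pi.zero_apply,
      smul_eq_mul, Fin.isValue, Matrix.cons_val_succ]
    clear_value T A₁ σ₃ y xv Jd
    clear T A₁ σ₃ y xv Jd
    norm_num [Fin.ext_iff, Matrix.vecHead, Matrix.vecTail, Matrix.cons_val_two]
    field_simp
    linear_combination φ * keyα
  · simp only [T, A₁, σ₃, y, xv, Jd, Matrix.mulVec, Matrix.mul_apply, dotProduct,
      Fin.sum_univ_three, Matrix.sub_apply, Matrix.add_apply, Matrix.smul_apply,
      Matrix.one_apply, Matrix.of_apply, Matrix.cons_val', Matrix.cons_val_zero,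
      Matrix.cons_val_one, Matrix.head_cons, Matrix.empty_val', Matrix.cons_val_fin_one,
      Matrix.head_fin_const, Matrix.tail_cons, Pi.zero_apply,
      smul_eq_mul, Fin.isValue, Matrix.cons_val_succ]
    clear_value T A₁ σ₃ y xv Jd
    clear T A₁ σ₃ y xv Jd
    norm_num [Fin.ext_iff, Matrix.vecHead, Matrix.vecTail, Matrix.cons_val_two]
    field_simp
    linear_combination ψ * keyβ
  · simp only [T, A₁, σ₃, y, xv, Jd, Matrix.mulVec, Matrix.mul_apply, dotProduct,
      Fin.sum_univ_three, Matrix.sub_apply, Matrix.add_apply, Matrix.smul_apply,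
      Matrix.one_apply, Matrix.of_apply, Matrix.cons_val', Matrix.cons_val_zero,
      Matrix.cons_val_one, Matrix.head_cons, Matrix.empty_val', Matrix.cons_val_fin_one,
      Matrix.head_fin_const, Matrix.tail_cons, Pi.zero_apply,
      smul_eq_mul, Fin.isValue, Matrix.cons_val_succ]
    clear_value T A₁ σ₃ y xv Jd
    clear T A₁ σ₃ y xv Jd
    norm_num [Fin.ext_iff, Matrix.vecHead, Matrix.vecTail, Matrix.cons_val_two]
    field_simp
    linear_combination χ * keyβ
end

section
/- Let u_s(x,t) = a_s · [(κ₁ e^{θ+iτ_s} + ς|κ₁|)/(κ₁* e^{θ} + ς|κ₁|)] where θ ∈ ℝ, e^{iτ_s} = (κ₁*+b_s)/(κ₁+b_s), ς = ±1, κ₁ = κ_R + iκ_I ∈ ℂ with κ₁ ≠ -b_s, b_s ∈ ℝ \ {0}, a_s ∈ ℝ. Then |u_s|² → a_s² as θ → ±∞, and at θ = 0 (the peak), |u_s|² = a_s²[1 + 2b_s κ_I²/((κ_R + ς|κ₁|)|κ₁+b_s|²)], provided κ_R + ς|κ₁| ≠ 0. -/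
open Filter Topology ComplexConjugate

/-!
Write `u = (p e^θ + q) / (r e^θ + w)`. As `θ → -∞` it tends to `q / w = a`; as `θ → ∞` to
`p / r = a κ₁ e^{iτ} / κ₁*`, of modulus `|a|` since `e^{iτ} = conj (κ₁ + b) / (κ₁ + b)` is
unimodular. At the peak put `s = ς|κ₁|`, so `s² = |κ₁|²`: then `|κ₁* + s|² = 2s(κ_R + s)` and
`|κ₁ conj (κ₁ + b) + s (κ₁ + b)|² = 2s((κ_R + s)|κ₁ + b|² + 2bκ_I²)`, and the factor `2s` cancels.
-/

namespace Complex

lemma tendsto_div_exp_atBot {p q r w : ℂ} (hw : w ≠ 0) :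
    Tendsto (fun θ : ℝ => (p * Real.exp θ + q) / (r * Real.exp θ + w)) atBot (𝓝 (q / w)) := by
  have hexp : Tendsto (fun θ : ℝ => (Real.exp θ : ℂ)) atBot (𝓝 0) := by
    simpa only [ofReal_zero, Function.comp_def] using
      (continuous_ofReal.tendsto 0).comp Real.tendsto_exp_atBot
  have h := ((hexp.const_mul p).add_const q).div ((hexp.const_mul r).add_const w)
    (by rwa [mul_zero, zero_add])
  simpa only [mul_zero, zero_add, Pi.div_def] using h

lemma tendsto_div_exp_atTop {p q r w : ℂ} (hr : r ≠ 0) :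
    Tendsto (fun θ : ℝ => (p * Real.exp θ + q) / (r * Real.exp θ + w)) atTop (𝓝 (p / r)) := by
  have hflip : ∀ θ : ℝ, (q * Real.exp (-θ) + p) / (w * Real.exp (-θ) + r)
      = (p * Real.exp θ + q) / (r * Real.exp θ + w) := by
    intro θ
    have he : (Real.exp θ : ℂ) ≠ 0 := ofReal_ne_zero.mpr (Real.exp_ne_zero θ)
    rw [Real.exp_neg, ofReal_inv, ← mul_div_mul_right _ _ he]
    congr 1 <;> field_simp <;> ring
  exact ((tendsto_div_exp_atBot hr).comp tendsto_neg_atTop_atBot).congr hflip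

lemma normSq_conj_div_self {z : ℂ} (hz : z ≠ 0) : normSq (conj z / z) = 1 := by
  rw [normSq_div, normSq_conj, div_self (normSq_pos.mpr hz).ne']

lemma normSq_conj_add_ofReal {κ : ℂ} {s : ℝ} (hs : s ^ 2 = normSq κ) :
    normSq (conj κ + s) = 2 * s * (κ.re + s) := by
  simp only [normSq_apply, add_re, add_im, conj_re, conj_im, ofReal_re, ofReal_im] at hs ⊢
  linear_combination -hs

lemma normSq_mul_conj_add_ofReal_mul {κ : ℂ} {b s : ℝ} (hs : s ^ 2 = normSq κ) :
    normSq (κ * conj (κ + b) + s * (κ + b))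
      = 2 * s * ((κ.re + s) * normSq (κ + b) + 2 * b * κ.im ^ 2) := by
  simp only [normSq_apply, add_re, add_im, mul_re, mul_im, conj_re, conj_im, ofReal_re,
    ofReal_im] at hs ⊢
  linear_combination (-((κ.re + b) ^ 2 + κ.im ^ 2)) * hs

end Complex

open Complex in
lemma soliton_normSq_peak {κ : ℂ} {a b s : ℝ} (hs : s ^ 2 = normSq κ) (hκb : κ + b ≠ 0)
    (hpeak : κ.re + s ≠ 0) :
    normSq (a * (κ * (conj (κ + b) / (κ + b)) + s) / (conj κ + s))
      = a ^ 2 * (1 + 2 * b * κ.im ^ 2 / ((κ.re + s) * ‖κ + b‖ ^ 2)) := by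
  have hs0 : s ≠ 0 := by
    rintro rfl
    have hκ : κ = 0 := normSq_eq_zero.mp (by simpa using hs.symm)
    simp [hκ] at hpeak
  have hnum : κ * (conj (κ + b) / (κ + b)) + s = (κ * conj (κ + b) + s * (κ + b)) / (κ + b) := by
    field_simp
  have hz : normSq (κ + b) ≠ 0 := (normSq_pos.mpr hκb).ne'
  rw [hnum, normSq_div, normSq_mul, normSq_div, normSq_ofReal, normSq_mul_conj_add_ofReal_mul hs,
    normSq_conj_add_ofReal hs, ← normSq_eq_norm_sq]
  field_simp

open Complex in
theorem stmt11_general (a b : ℝ) (ς : ℝ) (hς : ς = 1 ∨ ς = -1)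
    (κ : ℂ) (hκb : κ + (b : ℂ) ≠ 0)
    (hpeak : κ.re + ς * ‖κ‖ ≠ 0)
    (u : ℝ → ℂ)
    (hu : ∀ θ : ℝ, u θ =
      (a : ℂ) * (κ * Real.exp θ * (((starRingEnd ℂ) κ + b) / (κ + b))
          + (ς : ℂ) * (‖κ‖ : ℂ))
        / ((starRingEnd ℂ) κ * Real.exp θ + (ς : ℂ) * (‖κ‖ : ℂ))) :
    Tendsto (fun θ => Complex.normSq (u θ)) atTop (nhds (a ^ 2)) ∧
    Tendsto (fun θ => Complex.normSq (u θ)) atBot (nhds (a ^ 2)) ∧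
    Complex.normSq (u 0)
      = a ^ 2 * (1 + 2 * b * (κ.im) ^ 2
          / ((κ.re + ς * ‖κ‖) * (‖κ + b‖) ^ 2)) := by
  set s : ℝ := ς * ‖κ‖
  have hκ : κ ≠ 0 := by
    rintro rfl
    simp [s] at hpeak
  have hs : s ^ 2 = normSq κ := by
    rcases hς with rfl | rfl <;> simp [s, normSq_eq_norm_sq]
  have hs0 : (s : ℂ) ≠ 0 := ofReal_ne_zero.mpr
    (mul_ne_zero (by rcases hς with rfl | rfl <;> norm_num) (norm_ne_zero_iff.mpr hκ))
  have hconj : conj κ + b = conj (κ + b) := by simp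
  simp only [hconj] at hu
  set c := conj (κ + b) / (κ + b)
  obtain rfl : u = fun θ : ℝ => (a * κ * c * Real.exp θ + a * s) / (conj κ * Real.exp θ + s) := by
    funext θ
    rw [hu θ]
    push_cast [s]
    ring
  have hlim_top : normSq (a * κ * c / conj κ) = a ^ 2 := by
    rw [normSq_div, normSq_mul, normSq_mul, normSq_conj_div_self hκb, normSq_conj,
      normSq_ofReal, mul_one, mul_div_cancel_right₀ _ (normSq_pos.mpr hκ).ne', sq]
  have hlim_bot : normSq (a * s / s) = a ^ 2 := by
    rw [mul_div_assoc, div_self hs0, mul_one, normSq_ofReal, sq]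
  refine ⟨?_, ?_, ?_⟩
  · exact hlim_top ▸
      (continuous_normSq.tendsto _).comp (tendsto_div_exp_atTop ((map_ne_zero conj).mpr hκ))
  · exact hlim_bot ▸ (continuous_normSq.tendsto _).comp (tendsto_div_exp_atBot hs0)
  · rw [← soliton_normSq_peak hs hκb hpeak]
    simp only [Real.exp_zero, ofReal_one, mul_one, c]
    congr 1
    ring

/-- The dark/anti-dark soliton profile
`u(θ) = a(κ₁ e^{θ} e^{iτ} + ς|κ₁|)/(κ₁* e^{θ} + ς|κ₁|)` with `e^{iτ} = (κ₁*+b)/(κ₁+b)`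
satisfies `|u|² → a²` as `θ → ±∞` and
`|u(0)|² = a²(1 + 2bκ_I²/((κ_R + ς|κ₁|)|κ₁+b|²))`. -/
theorem stmt11 (a b : ℝ) (hb : b ≠ 0) (ς : ℝ) (hς : ς = 1 ∨ ς = -1)
    (κ : ℂ) (hκb : κ + (b : ℂ) ≠ 0)
    (hpeak : κ.re + ς * ‖κ‖ ≠ 0)
    (u : ℝ → ℂ)
    (hu : ∀ θ : ℝ, u θ =
      (a : ℂ) * (κ * Real.exp θ * (((starRingEnd ℂ) κ + b) / (κ + b))
          + (ς : ℂ) * (‖κ‖ : ℂ))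
        / ((starRingEnd ℂ) κ * Real.exp θ + (ς : ℂ) * (‖κ‖ : ℂ))) :
    Tendsto (fun θ => Complex.normSq (u θ)) atTop (nhds (a ^ 2)) ∧
    Tendsto (fun θ => Complex.normSq (u θ)) atBot (nhds (a ^ 2)) ∧
    Complex.normSq (u 0)
      = a ^ 2 * (1 + 2 * b * (κ.im) ^ 2
          / ((κ.re + ς * ‖κ‖) * (‖κ + b‖) ^ 2)) :=
  stmt11_general a b ς hς κ hκb hpeak u hu
end

section
/- Under the plane-wave reduction, the functions ω₁ = b₁x - ½(2a₁² + σa₂² - 2/b₁ + σa₂²b₂/b₁)t and ω₂ = b₂x - ½(2σa₂² + a₁² - 2/b₂ + a₁²b₁/b₂)t make u₁ = a₁e^{iω₁}, u₂ = a₂e^{iω₂} an exact solution of the coupled Fokas-Lenells system u₁,xt + u₁ + i(|u₁|² + σ|u₂|²/2)u₁,x + (i/2)σu₁u₂*u₂,x = 0, u₂,xt + u₂ + i(σ|u₂|² + |u₁|²/2)u₂,x + (i/2)u₂u₁*u₁,x = 0. -/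
/-!
Each derivative of a plane wave `a e^{i(kx - ct)}` is the wave times a constant, and the
cubic terms only see `|u₁|² = a₁²`, `|u₂|² = a₂²` and `u₂* u₂ₓ = i k₂ a₂²`. Each equation of the
system therefore reduces to the wave times a real number, which vanishes by the choice of the
frequencies, i.e. the dispersion relations
`b₁ c₁ + 1 = (a₁² + σa₂²/2) b₁ + σa₂² b₂/2` and `b₂ c₂ + 1 = (σa₂² + a₁²/2) b₂ + a₁² b₁/2`.
-/

open Complex

noncomputable def planeWave (a k c : ℝ) (x t : ℝ) : ℂ :=
  a * exp (I * ((k * x - c * t : ℝ) : ℂ))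

namespace planeWave

variable (a k c : ℝ)

theorem hasDerivAt_x (x t : ℝ) :
    HasDerivAt (fun y => planeWave a k c y t) (I * k * planeWave a k c x t) x := by
  have hphase : HasDerivAt (fun y : ℝ => I * ((k * y - c * t : ℝ) : ℂ)) (I * k) x := by
    simpa using (((hasDerivAt_id x).const_mul k).sub_const (c * t)).ofReal_comp.const_mul I
  refine (hphase.cexp.const_mul (a : ℂ)).congr_deriv ?_
  rw [planeWave]; ring

theorem hasDerivAt_t (x t : ℝ) :
    HasDerivAt (fun s => planeWave a k c x s) (-(I * c) * planeWave a k c x t) t := by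
  have hphase : HasDerivAt (fun s : ℝ => I * ((k * x - c * s : ℝ) : ℂ)) (-(I * c)) t := by
    simpa using (((hasDerivAt_id t).const_mul c).const_sub (k * x)).ofReal_comp.const_mul I
  refine (hphase.cexp.const_mul (a : ℂ)).congr_deriv ?_
  rw [planeWave]; ring

theorem deriv_x (x t : ℝ) :
    deriv (fun y => planeWave a k c y t) x = I * k * planeWave a k c x t :=
  (hasDerivAt_x a k c x t).deriv

theorem deriv_t_deriv_x (x t : ℝ) :
    deriv (fun s => deriv (fun y => planeWave a k c y s) x) t = k * c * planeWave a k c x t := by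
  simp only [deriv_x]
  rw [((hasDerivAt_t a k c x t).const_mul (I * k)).deriv]
  linear_combination (-(k * c) * planeWave a k c x t) * I_sq

theorem normSq_eq (x t : ℝ) : normSq (planeWave a k c x t) = a ^ 2 := by
  rw [planeWave, normSq_mul, normSq_ofReal, normSq_eq_norm_sq, norm_exp_I_mul_ofReal]; ring

theorem conj_mul_deriv_x (x t : ℝ) :
    starRingEnd ℂ (planeWave a k c x t) * deriv (fun y => planeWave a k c y t) x
      = I * k * (a ^ 2 : ℝ) := by
  rw [deriv_x, ← normSq_eq a k c x t, normSq_eq_conj_mul_self]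
  ring

theorem coupled_eq_zero (a' k' c' α β γ x t : ℝ)
    (hdisp : k * c + 1 = (α * a ^ 2 + β * a' ^ 2) * k + γ * a' ^ 2 * k') :
    deriv (fun s => deriv (fun y => planeWave a k c y s) x) t + planeWave a k c x t
      + I * (α * normSq (planeWave a k c x t) + β * normSq (planeWave a' k' c' x t))
        * deriv (fun y => planeWave a k c y t) x
      + I * γ * planeWave a k c x t * starRingEnd ℂ (planeWave a' k' c' x t)
        * deriv (fun y => planeWave a' k' c' y t) x = 0 := by
  have hdisp' : (k * c + 1 : ℂ) = (α * a ^ 2 + β * a' ^ 2) * k + γ * a' ^ 2 * k' := by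
    exact_mod_cast hdisp
  rw [mul_assoc _ (starRingEnd ℂ _), conj_mul_deriv_x, deriv_t_deriv_x, deriv_x,
    normSq_eq, normSq_eq]
  push_cast
  linear_combination
    planeWave a k c x t * (hdisp' + ((α * a ^ 2 + β * a' ^ 2) * k + γ * a' ^ 2 * k') * I_sq)

end planeWave

theorem stmt17_general (a₁ a₂ : ℝ) (b₁ b₂ : ℝ) (hb₁ : b₁ ≠ 0) (hb₂ : b₂ ≠ 0)
    (σ : ℝ) :
    let ω₁ : ℝ → ℝ → ℝ := fun x t =>
      b₁ * x - (1 / 2) * (2 * a₁ ^ 2 + σ * a₂ ^ 2 - 2 / b₁ + σ * a₂ ^ 2 * b₂ / b₁) * t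
    let ω₂ : ℝ → ℝ → ℝ := fun x t =>
      b₂ * x - (1 / 2) * (2 * σ * a₂ ^ 2 + a₁ ^ 2 - 2 / b₂ + a₁ ^ 2 * b₁ / b₂) * t
    let u₁ : ℝ → ℝ → ℂ := fun x t => (a₁ : ℂ) * Complex.exp (Complex.I * (ω₁ x t))
    let u₂ : ℝ → ℝ → ℂ := fun x t => (a₂ : ℂ) * Complex.exp (Complex.I * (ω₂ x t))
    ∀ x t : ℝ,
      (deriv (fun s => deriv (fun y => u₁ y s) x) t + u₁ x t
        + Complex.I * ((Complex.normSq (u₁ x t) : ℂ)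
            + (1 / 2) * (σ : ℂ) * (Complex.normSq (u₂ x t) : ℂ))
          * deriv (fun y => u₁ y t) x
        + (Complex.I / 2) * (σ : ℂ) * u₁ x t * (starRingEnd ℂ) (u₂ x t)
          * deriv (fun y => u₂ y t) x = 0) ∧
      (deriv (fun s => deriv (fun y => u₂ y s) x) t + u₂ x t
        + Complex.I * ((σ : ℂ) * (Complex.normSq (u₂ x t) : ℂ)
            + (1 / 2) * (Complex.normSq (u₁ x t) : ℂ))
          * deriv (fun y => u₂ y t) x
        + (Complex.I / 2) * u₂ x t * (starRingEnd ℂ) (u₁ x t)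
          * deriv (fun y => u₁ y t) x = 0) := by
  intro ω₁ ω₂ u₁ u₂ x t
  set c₁ := (1 / 2) * (2 * a₁ ^ 2 + σ * a₂ ^ 2 - 2 / b₁ + σ * a₂ ^ 2 * b₂ / b₁)
  set c₂ := (1 / 2) * (2 * σ * a₂ ^ 2 + a₁ ^ 2 - 2 / b₂ + a₁ ^ 2 * b₁ / b₂)
  have h₁ := planeWave.coupled_eq_zero a₁ b₁ c₁ a₂ b₂ c₂ 1 (σ / 2) (σ / 2) x t
    (by simp only [c₁]; field_simp; ring)
  have h₂ := planeWave.coupled_eq_zero a₂ b₂ c₂ a₁ b₁ c₁ σ (1 / 2) (1 / 2) x t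
    (by simp only [c₂]; field_simp; ring)
  have hu₁ : u₁ = planeWave a₁ b₁ c₁ := rfl
  have hu₂ : u₂ = planeWave a₂ b₂ c₂ := rfl
  rw [hu₁, hu₂]
  push_cast at h₁ h₂
  exact ⟨by linear_combination h₁, by linear_combination h₂⟩

/-- The plane waves `u₁ = a₁e^{iω₁}`, `u₂ = a₂e^{iω₂}` with
`ω₁ = b₁x - ½(2a₁² + σa₂² - 2/b₁ + σa₂²b₂/b₁)t` and
`ω₂ = b₂x - ½(2σa₂² + a₁² - 2/b₂ + a₁²b₁/b₂)t` solve the coupled Fokas-Lenells system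
`u₁ₓₜ + u₁ + i(|u₁|² + σ|u₂|²/2)u₁ₓ + (i/2)σu₁u₂*u₂ₓ = 0`,
`u₂ₓₜ + u₂ + i(σ|u₂|² + |u₁|²/2)u₂ₓ + (i/2)u₂u₁*u₁ₓ = 0`. -/
theorem stmt17 (a₁ a₂ : ℝ) (b₁ b₂ : ℝ) (hb₁ : b₁ ≠ 0) (hb₂ : b₂ ≠ 0)
    (σ : ℝ) (hσ : σ = 1 ∨ σ = -1) :
    let ω₁ : ℝ → ℝ → ℝ := fun x t =>
      b₁ * x - (1 / 2) * (2 * a₁ ^ 2 + σ * a₂ ^ 2 - 2 / b₁ + σ * a₂ ^ 2 * b₂ / b₁) * t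
    let ω₂ : ℝ → ℝ → ℝ := fun x t =>
      b₂ * x - (1 / 2) * (2 * σ * a₂ ^ 2 + a₁ ^ 2 - 2 / b₂ + a₁ ^ 2 * b₁ / b₂) * t
    let u₁ : ℝ → ℝ → ℂ := fun x t => (a₁ : ℂ) * Complex.exp (Complex.I * (ω₁ x t))
    let u₂ : ℝ → ℝ → ℂ := fun x t => (a₂ : ℂ) * Complex.exp (Complex.I * (ω₂ x t))
    ∀ x t : ℝ,
      (deriv (fun s => deriv (fun y => u₁ y s) x) t + u₁ x t
        + Complex.I * ((Complex.normSq (u₁ x t) : ℂ)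
            + (1 / 2) * (σ : ℂ) * (Complex.normSq (u₂ x t) : ℂ))
          * deriv (fun y => u₁ y t) x
        + (Complex.I / 2) * (σ : ℂ) * u₁ x t * (starRingEnd ℂ) (u₂ x t)
          * deriv (fun y => u₂ y t) x = 0) ∧
      (deriv (fun s => deriv (fun y => u₂ y s) x) t + u₂ x t
        + Complex.I * ((σ : ℂ) * (Complex.normSq (u₂ x t) : ℂ)
            + (1 / 2) * (Complex.normSq (u₁ x t) : ℂ))
          * deriv (fun y => u₂ y t) x
        + (Complex.I / 2) * u₂ x t * (starRingEnd ℂ) (u₁ x t)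
          * deriv (fun y => u₁ y t) x = 0) :=
  stmt17_general a₁ a₂ b₁ b₂ hb₁ hb₂ σ
end
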